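/- The latent Schatten 1-norm satisfies ‖W‖_{S1/1,latent} ≤ (min_k √r_k) · ‖W‖_F, where r_k is the mode-k rank of W. -/

import Mathlib

open scoped BigOperators

namespace TensorPaper

noncomputable def singularValues {m p : Type*} [Fintype m] [Fintype p] [DecidableEq m]
    (A : Matrix m p ℝ) : m → ℝ :=
  fun i => Real.sqrt ((Matrix.isHermitian_mul_conjTranspose_self A).eigenvalues i)

noncomputable def nuclearNorm {m p : Type*} [Fintype m] [Fintype p] [DecidableEq m]
    (A : Matrix m p ℝ) : ℝ := ∑ i, singularValues A i

noncomputable def spectralNorm {m p : Type*} [Fintype m] [Fintype p] [DecidableEq m]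
    (A : Matrix m p ℝ) : ℝ := ⨆ i, singularValues A i

noncomputable def frobM {m p : Type*} [Fintype m] [Fintype p]
    (A : Matrix m p ℝ) : ℝ := Real.sqrt (∑ i, ∑ j, A i j ^ 2)

variable {K : ℕ}

abbrev Tensor (n : Fin K → ℕ) : Type := (∀ j, Fin (n j)) → ℝ

noncomputable def unfoldT (n : Fin K → ℕ) (k : Fin K) (W : Tensor n) :
    Matrix (Fin (n k)) (∀ j : {j : Fin K // j ≠ k}, Fin (n j.1)) ℝ :=
  fun i rest => W (fun j => if h : j = k then Fin.cast (congrArg n h.symm) i else rest ⟨j, h⟩)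

noncomputable def frobT (n : Fin K → ℕ) (W : Tensor n) : ℝ :=
  Real.sqrt (∑ x, W x ^ 2)

noncomputable def tdot (n : Fin K → ℕ) (W X : Tensor n) : ℝ := ∑ x, W x * X x

noncomputable def latentNorm (n : Fin K → ℕ) (W : Tensor n) : ℝ :=
  sInf {s | ∃ Ws : Fin K → Tensor n,
    (∑ k, Ws k) = W ∧ s = ∑ k, nuclearNorm (unfoldT n k (Ws k))}

noncomputable def overlapSup (n : Fin K → ℕ) (X : Tensor n) : ℝ :=
  ⨆ k, spectralNorm (unfoldT n k X)

/-! Putting all of `W` into a single component `W^(k)` bounds the latent norm by the nuclear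
norm of the mode-`k` unfolding. For a matrix of rank `r`, Cauchy–Schwarz over its `r` nonzero
singular values gives `‖A‖_{S1} ≤ √r ‖A‖_F`, and unfolding preserves the Frobenius norm;
it remains to choose the mode of smallest rank. -/

section SingularValues

open Matrix Finset

variable {m p : Type*} [Fintype m] [Fintype p] [DecidableEq m]

lemma singularValues_nonneg (A : Matrix m p ℝ) (i : m) : 0 ≤ singularValues A i :=
  Real.sqrt_nonneg _

lemma nuclearNorm_nonneg (A : Matrix m p ℝ) : 0 ≤ nuclearNorm A :=
  sum_nonneg fun i _ => singularValues_nonneg A i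

lemma sq_singularValues (A : Matrix m p ℝ) (i : m) :
    singularValues A i ^ 2 = (isHermitian_mul_conjTranspose_self A).eigenvalues i :=
  Real.sq_sqrt ((posSemidef_self_mul_conjTranspose A).eigenvalues_nonneg i)

lemma sum_sq_singularValues (A : Matrix m p ℝ) :
    ∑ i, singularValues A i ^ 2 = ∑ i, ∑ j, A i j ^ 2 := by
  have htrace := (isHermitian_mul_conjTranspose_self A).trace_eq_sum_eigenvalues
  simp only [RCLike.ofReal_real_eq_id, id] at htrace
  simp_rw [sq_singularValues, ← htrace]
  simp [Matrix.trace, mul_apply, sq]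

lemma card_singularValues_ne_zero (A : Matrix m p ℝ) :
    #{i | singularValues A i ≠ 0} = A.rank := by
  have hA := isHermitian_mul_conjTranspose_self A
  rw [← rank_self_mul_conjTranspose A, hA.rank_eq_card_non_zero_eigs, Fintype.card_subtype]
  exact congrArg card <| filter_congr fun i _ =>
    not_congr (Real.sqrt_eq_zero ((posSemidef_self_mul_conjTranspose A).eigenvalues_nonneg i))

lemma nuclearNorm_le_sqrt_rank_mul_frobM (A : Matrix m p ℝ) :
    nuclearNorm A ≤ Real.sqrt A.rank * frobM A := by
  set s : Finset m := {i | singularValues A i ≠ 0}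
  have hsq : nuclearNorm A ^ 2 ≤ A.rank * ∑ i, ∑ j, A i j ^ 2 := calc
    nuclearNorm A ^ 2 = (∑ i ∈ s, singularValues A i) ^ 2 := by
      rw [nuclearNorm, sum_filter_ne_zero]
    _ ≤ #s * ∑ i ∈ s, singularValues A i ^ 2 := sq_sum_le_card_mul_sum_sq
    _ ≤ #s * ∑ i, singularValues A i ^ 2 := by gcongr; exact subset_univ s
    _ = A.rank * ∑ i, ∑ j, A i j ^ 2 := by
      rw [card_singularValues_ne_zero, sum_sq_singularValues]
  rw [frobM, ← Real.sqrt_mul (Nat.cast_nonneg _)]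
  exact Real.le_sqrt_of_sq_le hsq

lemma nuclearNorm_zero : nuclearNorm (0 : Matrix m p ℝ) = 0 := by
  refine le_antisymm ?_ (nuclearNorm_nonneg _)
  simpa [frobM] using nuclearNorm_le_sqrt_rank_mul_frobM (0 : Matrix m p ℝ)

end SingularValues

section Unfolding

open Finset

variable (n : Fin K → ℕ)

lemma unfoldT_zero (k : Fin K) : unfoldT n k (0 : Tensor n) = 0 := rfl

lemma frobM_unfoldT (k : Fin K) (W : Tensor n) : frobM (unfoldT n k W) = frobT n W := by
  rw [frobM, frobT, ← Fintype.sum_prod_type']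
  refine congrArg Real.sqrt (Fintype.sum_equiv (Equiv.piSplitAt k (fun j => Fin (n j))).symm
    _ _ fun x => congrArg (· ^ 2) (congrArg W (funext fun j => ?_)))
  by_cases h : j = k
  · subst h
    simp [Equiv.piSplitAt, Fin.cast]
  · simp [Equiv.piSplitAt, h]

lemma latentNorm_le_nuclearNorm_unfoldT (k : Fin K) (W : Tensor n) :
    latentNorm n W ≤ nuclearNorm (unfoldT n k W) := by
  classical
  refine csInf_le ⟨0, ?_⟩ ⟨Pi.single k W, Fintype.sum_pi_single' k W, ?_⟩
  · rintro s ⟨Ws, -, rfl⟩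
    exact sum_nonneg fun j _ => nuclearNorm_nonneg _
  · rw [Fintype.sum_eq_single k fun j hj => by
      rw [Pi.single_eq_of_ne hj, unfoldT_zero, nuclearNorm_zero], Pi.single_eq_same]

end Unfolding

theorem latentNorm_le_min_sqrt_rank_mul_frobenius
    {K : ℕ} (hK : 0 < K) (n : Fin K → ℕ) (W : Tensor n) :
    haveI : Nonempty (Fin K) := ⟨⟨0, hK⟩⟩
    latentNorm n W ≤ (⨅ k, Real.sqrt ((unfoldT n k W).rank : ℝ)) * frobT n W := by
  have : Nonempty (Fin K) := ⟨⟨0, hK⟩⟩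
  obtain ⟨k, hk⟩ :=
    exists_eq_ciInf_of_finite (f := fun k => Real.sqrt ((unfoldT n k W).rank : ℝ))
  calc latentNorm n W ≤ nuclearNorm (unfoldT n k W) := latentNorm_le_nuclearNorm_unfoldT n k W
    _ ≤ Real.sqrt (unfoldT n k W).rank * frobM (unfoldT n k W) :=
      nuclearNorm_le_sqrt_rank_mul_frobM _
    _ = (⨅ k, Real.sqrt ((unfoldT n k W).rank : ℝ)) * frobT n W := by rw [frobM_unfoldT, hk]

end TensorPaper
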